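/- arXiv:1607.01993 — 2 statements merged into one kernel-verified Lean document; each statement's English description precedes it below -/
import Mathlib

section
/- Let A = Π : ⊛_{i=1}^n array(a_i,b_i) * ⊛_{i=1}^k (t_i ↦ u_i) be quantifier-free and B = ∃z⃗. Π' : ⊛_{j=1}^m array(c_j,d_j) * ⊛_{j=1}^ℓ (v_j ↦ w_j), where the bound variables z⃗ are disjoint from all variables of A and no variable w_j on the right-hand side of a points-to in B is among z⃗. Then for every stack s: s ⊨ χ(A,B) if and only if there exists a heap h with s,h ⊨ A and s,h ⊭ B. -/
/-! ## Array separation logic (ASL): syntax and stack-heap semantics -/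

/-- Terms of array separation logic: variables (named by naturals), constants,
addition, and multiplication by a constant. -/
inductive Trm : Type where
  | var : ℕ → Trm
  | const : ℕ → Trm
  | add : Trm → Trm → Trm
  | smul : ℕ → Trm → Trm

/-- A stack maps variables to naturals. -/
abbrev Stack := ℕ → ℕ

/-- Evaluation of terms under a stack. -/
def Trm.eval (s : Stack) : Trm → ℕ
  | .var x => s x
  | .const n => n
  | .add t u => t.eval s + u.eval s
  | .smul n t => n * t.eval s

/-- Variables occurring in a term. -/
def Trm.vars : Trm → Set ℕ
  | .var x => {x}
  | .const _ => ∅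
  | .add t u => t.vars ∪ u.vars
  | .smul _ t => t.vars

/-- Pure formulas: conjunctions of atomic arithmetic constraints. -/
inductive PureF : Type where
  | tru : PureF
  | eq : Trm → Trm → PureF
  | ne : Trm → Trm → PureF
  | le : Trm → Trm → PureF
  | lt : Trm → Trm → PureF
  | and : PureF → PureF → PureF

/-- Satisfaction of pure formulas (depends only on the stack). -/
def PureF.sat (s : Stack) : PureF → Prop
  | .tru => True
  | .eq t u => t.eval s = u.eval s
  | .ne t u => t.eval s ≠ u.eval s
  | .le t u => t.eval s ≤ u.eval s
  | .lt t u => t.eval s < u.eval s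
  | .and p q => p.sat s ∧ q.sat s

def PureF.vars : PureF → Set ℕ
  | .tru => ∅
  | .eq t u => t.vars ∪ u.vars
  | .ne t u => t.vars ∪ u.vars
  | .le t u => t.vars ∪ u.vars
  | .lt t u => t.vars ∪ u.vars
  | .and p q => p.vars ∪ q.vars

/-- The (top-level) terms occurring in a pure formula. -/
def PureF.trms : PureF → List Trm
  | .tru => []
  | .eq t u => [t, u]
  | .ne t u => [t, u]
  | .le t u => [t, u]
  | .lt t u => [t, u]
  | .and p q => p.trms ++ q.trms

/-- The conjuncts of a pure formula. -/
def PureF.conjuncts : PureF → List PureF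
  | .and p q => p.conjuncts ++ q.conjuncts
  | p => [p]

/-- Finite conjunction. -/
def bigAnd : List PureF → PureF
  | [] => .tru
  | p :: ps => .and p (bigAnd ps)

/-- Spatial formulas: `emp`, points-to, arrays, and separating conjunction. -/
inductive Spatial : Type where
  | emp : Spatial
  | pto : Trm → Trm → Spatial
  | arr : Trm → Trm → Spatial
  | star : Spatial → Spatial → Spatial

/-- Heaps: finite partial functions from ℕ (locations) to ℕ (values). -/
abbrev Heap := Finmap (fun _ : ℕ => ℕ)

/-- Satisfaction of spatial formulas. -/
def Spatial.sat (s : Stack) : Spatial → Heap → Prop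
  | .emp, h => h = ∅
  | .pto t u, h =>
      h.keys = {Trm.eval s t} ∧ Finmap.lookup (Trm.eval s t) h = some (Trm.eval s u)
  | .arr t u, h =>
      Trm.eval s t ≤ Trm.eval s u ∧ h.keys = Finset.Icc (Trm.eval s t) (Trm.eval s u)
  | .star F G, h =>
      ∃ h₁ h₂ : Heap, h₁.Disjoint h₂ ∧ h = h₁ ∪ h₂ ∧ F.sat s h₁ ∧ G.sat s h₂

def Spatial.vars : Spatial → Set ℕ
  | .emp => ∅
  | .pto t u => t.vars ∪ u.vars
  | .arr t u => t.vars ∪ u.vars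
  | .star F G => F.vars ∪ G.vars

/-- The (top-level) terms occurring in a spatial formula. -/
def Spatial.trms : Spatial → List Trm
  | .emp => []
  | .pto t u => [t, u]
  | .arr t u => [t, u]
  | .star F G => F.trms ++ G.trms

/-- The points-to atoms of a spatial formula, as (address, value) pairs. -/
def Spatial.ptos : Spatial → List (Trm × Trm)
  | .emp => []
  | .pto t u => [(t, u)]
  | .arr _ _ => []
  | .star F G => F.ptos ++ G.ptos

/-- The array atoms of a spatial formula, as endpoint pairs. -/
def Spatial.arrs : Spatial → List (Trm × Trm)
  | .emp => []
  | .pto _ _ => []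
  | .arr t u => [(t, u)]
  | .star F G => F.arrs ++ G.arrs

/-- The arrays of the array abstraction `⟨A⟩`: each points-to `c ↦ d` is
replaced by the single-cell array `array(c,c)`. -/
def Spatial.absArrays : Spatial → List (Trm × Trm)
  | .emp => []
  | .pto t _ => [(t, t)]
  | .arr t u => [(t, u)]
  | .star F G => F.absArrays ++ G.absArrays

/-- Finite separating conjunction. -/
def bigStar : List Spatial → Spatial
  | [] => .emp
  | F :: Fs => .star F (bigStar Fs)

/-- Quantifier-free symbolic heaps `Π : F`. -/
structure SymHeap : Type where
  pure : PureF
  spatial : Spatial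

/-- Satisfaction of quantifier-free symbolic heaps. -/
def SymHeap.sat (s : Stack) (h : Heap) (A : SymHeap) : Prop :=
  A.pure.sat s ∧ A.spatial.sat s h

def SymHeap.vars (A : SymHeap) : Set ℕ := A.pure.vars ∪ A.spatial.vars

/-- All (top-level) terms occurring in a symbolic heap. -/
def SymHeap.trms (A : SymHeap) : List Trm := A.pure.trms ++ A.spatial.trms

/-- Lifting `*` to symbolic heaps: conjoin pure parts, `*`-conjoin spatial parts. -/
def SymHeap.star (A X : SymHeap) : SymHeap :=
  ⟨.and A.pure X.pure, .star A.spatial X.spatial⟩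

/-- Satisfiability of a symbolic heap. -/
def SymHeap.Satisfiable (A : SymHeap) : Prop := ∃ (s : Stack) (h : Heap), A.sat s h

/-- Semantic entailment between quantifier-free symbolic heaps. -/
def Entails (A B : SymHeap) : Prop := ∀ (s : Stack) (h : Heap), A.sat s h → B.sat s h

/-- Existentially quantified symbolic heaps `∃ z⃗. Π : F`. -/
structure QSymHeap : Type where
  bound : List ℕ
  body : SymHeap

/-- Satisfaction of quantified symbolic heaps: some extension of the stack on the
bound variables satisfies the body. -/
def QSymHeap.sat (s : Stack) (h : Heap) (B : QSymHeap) : Prop :=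
  ∃ s' : Stack, (∀ x : ℕ, x ∉ B.bound → s' x = s x) ∧ B.body.sat s' h

/-! ## The arithmetic encodings γ, β, φ, ψ₁, ψ₂, χ (interpreted over stacks) -/

/-- `s ⊨ γ(A)`: the Presburger satisfiability encoding of `A`, i.e. the pure part
of `A` together with well-definedness and pairwise disjointness of the arrays of
the array abstraction `⟨A⟩`. -/
def gammaSat (A : SymHeap) (s : Stack) : Prop :=
  A.pure.sat s ∧
  (∀ p ∈ A.spatial.absArrays, Trm.eval s p.1 ≤ Trm.eval s p.2) ∧
  A.spatial.absArrays.Pairwise (fun p q =>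
    Trm.eval s p.2 < Trm.eval s q.1 ∨ Trm.eval s q.2 < Trm.eval s p.1)

/-- `s ⊨ β(A,B)`. -/
def betaSat (A B : SymHeap) (s : Stack) : Prop :=
  gammaSat A s ∧ gammaSat B s ∧
  (∀ p ∈ B.spatial.ptos, ∀ q ∈ A.spatial.arrs,
      Trm.eval s p.1 < Trm.eval s q.1 ∨ Trm.eval s p.1 > Trm.eval s q.2) ∧
  (∀ p ∈ A.spatial.ptos, ∀ q ∈ B.spatial.ptos,
      Trm.eval s p.1 ≠ Trm.eval s q.1 ∨ Trm.eval s p.2 = Trm.eval s q.2)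

/-- The term set `Terms(A,B)`: all terms occurring in `A` and `B`, together with
the successor terms `b_i + 1`, `d_i + 1` (array right endpoints) and
`t_i + 1`, `v_i + 1` (points-to addresses). -/
def termSet (A B : SymHeap) : List Trm :=
  A.trms ++ B.trms ++
  (A.spatial.arrs.map fun p => Trm.add p.2 (Trm.const 1)) ++
  (B.spatial.arrs.map fun p => Trm.add p.2 (Trm.const 1)) ++
  (A.spatial.ptos.map fun p => Trm.add p.1 (Trm.const 1)) ++
  (B.spatial.ptos.map fun p => Trm.add p.1 (Trm.const 1))

/-- A solution seed for the biabduction instance `(A,B)`. -/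
def IsSolutionSeed (A B : SymHeap) (Δ : PureF) : Prop :=
  (∃ s : Stack, Δ.sat s) ∧
  (∀ s : Stack, Δ.sat s → betaSat A B s) ∧
  (∀ δ ∈ Δ.conjuncts, ∃ t ∈ termSet A B, ∃ u ∈ termSet A B,
      δ = PureF.lt t u ∨ δ = PureF.eq t u) ∧
  (∀ t ∈ termSet A B, ∀ u ∈ termSet A B, ∃ δ ∈ Δ.conjuncts,
      δ = PureF.lt t u ∨ δ = PureF.lt u t ∨ δ = PureF.eq t u)

/-- The (quantifier-free) biabduction problem `(A,B)` has a solution. -/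
def HasBiabductionSolution (A B : SymHeap) : Prop :=
  ∃ X Y : SymHeap, (A.star X).Satisfiable ∧ Entails (A.star X) (B.star Y)

/-- `s ⊨ φ(A,B)` (over the array abstractions of `A` and `B`). -/
def phiSat (A B : SymHeap) (s : Stack) : Prop :=
  ∃ x : ℕ,
    (∃ p ∈ A.spatial.absArrays, Trm.eval s p.1 ≤ x ∧ x ≤ Trm.eval s p.2) ∧
    ∀ q ∈ B.spatial.absArrays, x < Trm.eval s q.1 ∨ x > Trm.eval s q.2

/-- `s ⊨ ψ₁(A,B)`: some points-to address of `B` is covered by an array of `A`. -/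
def psi1Sat (A B : SymHeap) (s : Stack) : Prop :=
  ∃ p ∈ A.spatial.arrs, ∃ q ∈ B.spatial.ptos,
    Trm.eval s p.1 ≤ Trm.eval s q.1 ∧ Trm.eval s q.1 ≤ Trm.eval s p.2

/-- `s ⊨ ψ₂(A,B)`: some pointers of `A` and `B` share an address but disagree on
their contents. -/
def psi2Sat (A B : SymHeap) (s : Stack) : Prop :=
  ∃ p ∈ A.spatial.ptos, ∃ q ∈ B.spatial.ptos,
    Trm.eval s p.1 = Trm.eval s q.1 ∧ Trm.eval s p.2 ≠ Trm.eval s q.2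

/-- `s ⊨ χ(A, ∃z⃗.Q)`. -/
def chiSat (A : SymHeap) (zs : List ℕ) (Q : SymHeap) (s : Stack) : Prop :=
  gammaSat A s ∧
  ∀ s' : Stack, (∀ x : ℕ, x ∉ zs → s' x = s x) →
    (¬ gammaSat Q s' ∨ phiSat A Q s' ∨ phiSat Q A s' ∨
      psi1Sat A Q s' ∨ psi2Sat A Q s')

/-! A heap of `A` is determined by `s` up to the values stored in array cells: its domain is the
union of the arrays of `⟨A⟩`, and pointer cells hold their targets. If `χ` holds, take the heap of
`A` storing in every array cell a value `d` exceeding all `w_j`, which do not depend on `z⃗`. If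
some extension `s'` of `s` made it a model of `qf(B)`, then `γ(qf(B))` would hold, both `φ`s would
fail (the two footprints are its domain), `ψ₂` would fail (pointers agree with the heap), and `ψ₁`
would fail (array cells hold `d`). Conversely, if all these fail at some `s'`, the footprints
coincide, every pointer of `B` lands on a pointer of `A` with the same target, and so the heap
of `A` is a model of `qf(B)` under `s'`. -/

theorem Trm.eval_congr {s s' : Stack} : ∀ {t : Trm}, (∀ x ∈ t.vars, s x = s' x) →
    t.eval s = t.eval s'
  | .var _, h => h _ rfl
  | .const _, _ => rfl
  | .add t u, h => by
      simp only [Trm.eval, Trm.eval_congr (t := t) fun x hx => h x (Or.inl hx),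
        Trm.eval_congr (t := u) fun x hx => h x (Or.inr hx)]
  | .smul _ t, h => by simp only [Trm.eval, Trm.eval_congr (t := t) h]

namespace Heap

noncomputable def restrict (h : Heap) (S : Finset ℕ) : Heap :=
  Finmap.keysLookupEquiv.symm
    ⟨(h.keys ∩ S, fun k => if k ∈ S then h.lookup k else none), fun k => by
      by_cases hk : k ∈ S <;> simp [hk, Finmap.lookup_isSome, Finmap.mem_keys]⟩

@[simp]
theorem keys_restrict (h : Heap) (S : Finset ℕ) : (h.restrict S).keys = h.keys ∩ S :=
  Finmap.keysLookupEquiv_symm_apply_keys _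

theorem lookup_restrict (h : Heap) (S : Finset ℕ) (k : ℕ) :
    (h.restrict S).lookup k = if k ∈ S then h.lookup k else none :=
  Finmap.keysLookupEquiv_symm_apply_lookup _ k

noncomputable def const (S : Finset ℕ) (d : ℕ) : Heap :=
  Finmap.keysLookupEquiv.symm
    ⟨(S, fun k => if k ∈ S then some d else none), fun k => by
      by_cases hk : k ∈ S <;> simp [hk]⟩

@[simp]
theorem keys_const (S : Finset ℕ) (d : ℕ) : (const S d).keys = S :=
  Finmap.keysLookupEquiv_symm_apply_keys _

theorem lookup_const (S : Finset ℕ) (d : ℕ) (k : ℕ) :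
    (const S d).lookup k = if k ∈ S then some d else none :=
  Finmap.keysLookupEquiv_symm_apply_lookup _ k

theorem eq_empty_of_keys_eq_empty {h : Heap} (hk : h.keys = ∅) : h = ∅ :=
  Finmap.ext_lookup fun k => by
    rw [Finmap.lookup_empty, Finmap.lookup_eq_none, ← Finmap.mem_keys, hk]
    exact Finset.notMem_empty k

theorem eq_restrict_union_restrict {h : Heap} {S T : Finset ℕ} (hk : h.keys ⊆ S ∪ T) :
    h = h.restrict S ∪ h.restrict T := by
  refine Finmap.ext_lookup fun k => ?_
  by_cases hS : k ∈ h.restrict S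
  · rw [Finmap.lookup_union_left hS, lookup_restrict, if_pos]
    rw [← Finmap.mem_keys, keys_restrict] at hS
    exact (Finset.mem_inter.1 hS).2
  · rw [Finmap.lookup_union_right hS, lookup_restrict]
    split_ifs with hT
    · rfl
    · rw [Finmap.lookup_eq_none, ← Finmap.mem_keys]
      intro hkh
      rw [← Finmap.mem_keys, keys_restrict, Finset.mem_inter, not_and] at hS
      rcases Finset.mem_union.1 (hk hkh) with h' | h'
      exacts [hS hkh h', hT h']

end Heap

namespace Spatial

variable {s s' : Stack} {d : ℕ} {F G : Spatial} {h : Heap}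

theorem sat_congr (hs : ∀ x ∈ F.vars, s x = s' x) : F.sat s h ↔ F.sat s' h := by
  induction F generalizing h with
  | emp => rfl
  | pto t u | arr t u =>
    have ht : t.eval s = t.eval s' := Trm.eval_congr fun x hx => hs x (Or.inl hx)
    have hu : u.eval s = u.eval s' := Trm.eval_congr fun x hx => hs x (Or.inr hx)
    simp only [Spatial.sat]
    -- `simp` cannot rewrite the key argument of the dependently typed `Finmap.lookup`
    rw [ht, hu]
  | star F G ihF ihG =>
    simp only [Spatial.sat, ihF fun x hx => hs x (Or.inl hx), ihG fun x hx => hs x (Or.inr hx)]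

theorem vars_subset_of_mem_arrs {p : Trm × Trm} (hp : p ∈ F.arrs) :
    p.1.vars ⊆ F.vars ∧ p.2.vars ⊆ F.vars := by
  induction F with
  | emp | pto => simp [arrs] at hp
  | arr t u =>
    obtain rfl : p = (t, u) := by simpa [arrs] using hp
    exact ⟨Set.subset_union_left, Set.subset_union_right⟩
  | star F G ihF ihG =>
    rcases List.mem_append.1 hp with hp | hp
    · exact (ihF hp).imp (·.trans Set.subset_union_left) (·.trans Set.subset_union_left)
    · exact (ihG hp).imp (·.trans Set.subset_union_right) (·.trans Set.subset_union_right)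

def footprint (s : Stack) : Spatial → Finset ℕ
  | .emp => ∅
  | .pto t _ => {t.eval s}
  | .arr t u => Finset.Icc (t.eval s) (u.eval s)
  | .star F G => F.footprint s ∪ G.footprint s

theorem mem_footprint {k : ℕ} : k ∈ F.footprint s ↔
    (∃ a ∈ F.arrs, a.1.eval s ≤ k ∧ k ≤ a.2.eval s) ∨ ∃ p ∈ F.ptos, p.1.eval s = k := by
  induction F with
  | emp => simp [footprint, arrs, ptos]
  | pto t u => simp [footprint, arrs, ptos, eq_comm]
  | arr t u => simp [footprint, arrs, ptos]
  | star F G ihF ihG =>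
    simp only [footprint, arrs, ptos, Finset.mem_union, ihF, ihG, List.mem_append]
    grind

theorem mem_footprint_iff_exists_absArrays {k : ℕ} :
    k ∈ F.footprint s ↔ ∃ p ∈ F.absArrays, p.1.eval s ≤ k ∧ k ≤ p.2.eval s := by
  induction F with
  | emp => simp [footprint, absArrays]
  | pto t u => simp [footprint, absArrays, le_antisymm_iff, and_comm]
  | arr t u => simp [footprint, absArrays]
  | star F G ihF ihG =>
    simp only [footprint, absArrays, Finset.mem_union, ihF, ihG, List.mem_append]
    grind

def WellFormed (s : Stack) : Spatial → Prop
  | .emp | .pto _ _ => True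
  | .arr t u => t.eval s ≤ u.eval s
  | .star F G => F.WellFormed s ∧ G.WellFormed s ∧ Disjoint (F.footprint s) (G.footprint s)

theorem disjoint_footprint_iff
    (hF : ∀ p ∈ F.absArrays, p.1.eval s ≤ p.2.eval s)
    (hG : ∀ q ∈ G.absArrays, q.1.eval s ≤ q.2.eval s) :
    Disjoint (F.footprint s) (G.footprint s) ↔ ∀ p ∈ F.absArrays, ∀ q ∈ G.absArrays,
      p.2.eval s < q.1.eval s ∨ q.2.eval s < p.1.eval s := by
  simp only [Finset.disjoint_left, mem_footprint_iff_exists_absArrays]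
  constructor
  · intro hd p hp q hq
    by_contra! hpq
    exact hd ⟨p, hp, le_max_left _ _, max_le (hF p hp) hpq.1⟩
      ⟨q, hq, le_max_right _ _, max_le hpq.2 (hG q hq)⟩
  · rintro hd k ⟨p, hp, hp₁, hp₂⟩ ⟨q, hq, hq₁, hq₂⟩
    rcases hd p hp q hq with h' | h' <;> omega

theorem wellFormed_iff : F.WellFormed s ↔
    (∀ p ∈ F.absArrays, p.1.eval s ≤ p.2.eval s) ∧
      F.absArrays.Pairwise (fun p q => p.2.eval s < q.1.eval s ∨ q.2.eval s < p.1.eval s) := by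
  induction F with
  | emp => simp [WellFormed, absArrays]
  | pto t u => simp [WellFormed, absArrays]
  | arr t u => simp [WellFormed, absArrays]
  | star F G ihF ihG =>
    simp only [WellFormed, absArrays, List.mem_append, List.pairwise_append, ihF, ihG]
    constructor
    · rintro ⟨⟨hF, pF⟩, ⟨hG, pG⟩, hd⟩
      exact ⟨fun p hp => hp.elim (hF p) (hG p), pF, pG, (disjoint_footprint_iff hF hG).1 hd⟩
    · rintro ⟨hw, pF, pG, hd⟩
      have hF := fun p hp => hw p (Or.inl hp)
      have hG := fun p hp => hw p (Or.inr hp)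
      exact ⟨⟨hF, pF⟩, ⟨hG, pG⟩, (disjoint_footprint_iff hF hG).2 hd⟩

theorem sat_iff : F.sat s h ↔ F.WellFormed s ∧ h.keys = F.footprint s ∧
    ∀ p ∈ F.ptos, h.lookup (p.1.eval s) = some (p.2.eval s) := by
  induction F generalizing h with
  | emp =>
    simp only [Spatial.sat, WellFormed, footprint, ptos, List.not_mem_nil]
    exact ⟨by rintro rfl; simp, fun ⟨_, hk, _⟩ => Heap.eq_empty_of_keys_eq_empty hk⟩
  | pto t u => simp [Spatial.sat, WellFormed, footprint, ptos]
  | arr t u => simp [Spatial.sat, WellFormed, footprint, ptos]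
  | star F G ihF ihG =>
    simp only [Spatial.sat, WellFormed, footprint, ptos, List.mem_append]
    constructor
    · rintro ⟨h₁, h₂, hd, rfl, h₁F, h₂G⟩
      obtain ⟨wF, kF, pF⟩ := ihF.1 h₁F
      obtain ⟨wG, kG, pG⟩ := ihG.1 h₂G
      refine ⟨⟨wF, wG, ?_⟩, by rw [Finmap.keys_union, kF, kG], ?_⟩
      · rw [← kF, ← kG, Finset.disjoint_left]
        exact fun k h₁k h₂k => hd k (Finmap.mem_keys.1 h₁k) (Finmap.mem_keys.1 h₂k)
      · rintro p (hp | hp)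
        · rw [Finmap.lookup_union_left (Finmap.mem_of_lookup_eq_some (pF p hp)), pF p hp]
        · rw [Finmap.lookup_union_right
            (Finmap.Disjoint.symm _ _ hd _ (Finmap.mem_of_lookup_eq_some (pG p hp))), pG p hp]
    · rintro ⟨⟨wF, wG, hd⟩, hk, hp⟩
      refine ⟨h.restrict (F.footprint s), h.restrict (G.footprint s), ?_,
        Heap.eq_restrict_union_restrict hk.le, ihF.2 ⟨wF, ?_, ?_⟩, ihG.2 ⟨wG, ?_, ?_⟩⟩
      · intro k h₁ h₂
        simp only [← Finmap.mem_keys, Heap.keys_restrict, Finset.mem_inter] at h₁ h₂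
        exact Finset.disjoint_left.1 hd h₁.2 h₂.2
      · rw [Heap.keys_restrict, hk, Finset.union_inter_cancel_left]
      · intro p hpF
        rw [Heap.lookup_restrict, if_pos (mem_footprint.2 (Or.inr ⟨p, hpF, rfl⟩))]
        exact hp p (Or.inl hpF)
      · rw [Heap.keys_restrict, hk, Finset.union_inter_cancel_right]
      · intro p hpG
        rw [Heap.lookup_restrict, if_pos (mem_footprint.2 (Or.inr ⟨p, hpG, rfl⟩))]
        exact hp p (Or.inr hpG)

noncomputable def canonicalHeap (s : Stack) (d : ℕ) : Spatial → Heap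
  | .emp => ∅
  | .pto t u => Finmap.singleton (t.eval s) (u.eval s)
  | .arr t u => Heap.const (Finset.Icc (t.eval s) (u.eval s)) d
  | .star F G => F.canonicalHeap s d ∪ G.canonicalHeap s d

theorem keys_canonicalHeap : (F.canonicalHeap s d).keys = F.footprint s := by
  induction F with
  | emp => rfl
  | pto t u => exact Finmap.keys_singleton _ _
  | arr t u => exact Heap.keys_const _ _
  | star F G ihF ihG => rw [canonicalHeap, Finmap.keys_union, ihF, ihG, footprint]

theorem mem_canonicalHeap {k : ℕ} : k ∈ F.canonicalHeap s d ↔ k ∈ F.footprint s := by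
  rw [← Finmap.mem_keys, keys_canonicalHeap]

theorem sat_canonicalHeap (hF : F.WellFormed s) : F.sat s (F.canonicalHeap s d) := by
  induction F with
  | emp => rfl
  | pto t u => exact ⟨Finmap.keys_singleton _ _, Finmap.lookup_singleton_eq⟩
  | arr t u => exact ⟨hF, Heap.keys_const _ _⟩
  | star F G ihF ihG =>
    obtain ⟨wF, wG, hd⟩ := hF
    exact ⟨_, _, fun k hkF hkG => Finset.disjoint_left.1 hd (mem_canonicalHeap.1 hkF)
      (mem_canonicalHeap.1 hkG), rfl, ihF wF, ihG wG⟩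

theorem lookup_canonicalHeap_of_mem_arrs (hF : F.WellFormed s) {a : Trm × Trm}
    (ha : a ∈ F.arrs) {k : ℕ} (hk₁ : a.1.eval s ≤ k) (hk₂ : k ≤ a.2.eval s) :
    (F.canonicalHeap s d).lookup k = some d := by
  induction F with
  | emp | pto => simp [arrs] at ha
  | arr t u =>
    obtain rfl : a = (t, u) := by simpa [arrs] using ha
    rw [canonicalHeap, Heap.lookup_const, if_pos (Finset.mem_Icc.2 ⟨hk₁, hk₂⟩)]
  | star F G ihF ihG =>
    obtain ⟨wF, wG, hd⟩ := hF
    rcases List.mem_append.1 ha with ha | ha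
    · have hkF : k ∈ F.footprint s := mem_footprint.2 (Or.inl ⟨a, ha, hk₁, hk₂⟩)
      rw [canonicalHeap, Finmap.lookup_union_left (mem_canonicalHeap.2 hkF), ihF wF ha]
    · have hkG : k ∈ G.footprint s := mem_footprint.2 (Or.inl ⟨a, ha, hk₁, hk₂⟩)
      rw [canonicalHeap, Finmap.lookup_union_right
        (fun hkF => Finset.disjoint_right.1 hd hkG (mem_canonicalHeap.1 hkF)), ihG wG ha]

end Spatial

section Encodings

variable {s : Stack} {h : Heap} {A B : SymHeap}

theorem gammaSat_iff : gammaSat A s ↔ A.pure.sat s ∧ A.spatial.WellFormed s := by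
  rw [Spatial.wellFormed_iff]
  rfl

theorem gammaSat_of_sat (hA : A.sat s h) : gammaSat A s :=
  gammaSat_iff.2 ⟨hA.1, (Spatial.sat_iff.1 hA.2).1⟩

theorem phiSat_iff_not_subset :
    phiSat A B s ↔ ¬ A.spatial.footprint s ⊆ B.spatial.footprint s := by
  simp only [phiSat, Finset.not_subset, Spatial.mem_footprint_iff_exists_absArrays]
  push Not
  refine exists_congr fun x => and_congr_right fun _ => forall₂_congr fun q _ => ?_
  omega

theorem not_phiSat_of_sat (hA : A.spatial.sat s h) (hB : B.spatial.sat s h) :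
    ¬ phiSat A B s := by
  rw [phiSat_iff_not_subset, ← (Spatial.sat_iff.1 hA).2.1, ← (Spatial.sat_iff.1 hB).2.1]
  exact not_not_intro subset_rfl

theorem not_psi2Sat_of_sat (hA : A.spatial.sat s h) (hB : B.spatial.sat s h) :
    ¬ psi2Sat A B s := by
  rintro ⟨p, hp, q, hq, haddr, hval⟩
  have hpv := (Spatial.sat_iff.1 hA).2.2 p hp
  rw [haddr, (Spatial.sat_iff.1 hB).2.2 q hq, Option.some_inj] at hpv
  exact hval hpv.symm

theorem not_psi1Sat_of_lookup_eq {d : ℕ} (hB : B.spatial.sat s h)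
    (hd : ∀ a ∈ A.spatial.arrs, ∀ k, a.1.eval s ≤ k → k ≤ a.2.eval s → h.lookup k = some d)
    (hBd : ∀ q ∈ B.spatial.ptos, q.2.eval s ≠ d) :
    ¬ psi1Sat A B s := by
  rintro ⟨a, ha, q, hq, hq₁, hq₂⟩
  have hqv := (Spatial.sat_iff.1 hB).2.2 q hq
  rw [hd a ha _ hq₁ hq₂, Option.some_inj] at hqv
  exact hBd q hq hqv.symm

theorem sat_of_not_phiSat_of_not_psiSat (hA : A.spatial.sat s h) (hB : B.spatial.WellFormed s)
    (hAB : ¬ phiSat A B s) (hBA : ¬ phiSat B A s) (hψ₁ : ¬ psi1Sat A B s)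
    (hψ₂ : ¬ psi2Sat A B s) : B.spatial.sat s h := by
  obtain ⟨-, hk, hpA⟩ := Spatial.sat_iff.1 hA
  rw [phiSat_iff_not_subset, not_not] at hAB hBA
  have hfp : A.spatial.footprint s = B.spatial.footprint s := hAB.antisymm hBA
  refine Spatial.sat_iff.2 ⟨hB, hk.trans hfp, fun q hq => ?_⟩
  have hqA : q.1.eval s ∈ A.spatial.footprint s :=
    hfp ▸ Spatial.mem_footprint.2 (Or.inr ⟨q, hq, rfl⟩)
  rcases Spatial.mem_footprint.1 hqA with ⟨a, ha, ha₁, ha₂⟩ | ⟨p, hp, hpq⟩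
  · exact absurd ⟨a, ha, q, hq, ha₁, ha₂⟩ hψ₁
  · rw [← hpq, hpA p hp]
    by_contra hne
    exact hψ₂ ⟨p, hp, q, hq, hpq, fun h' => hne (congrArg some h')⟩

end Encodings

section Chi

variable {A Q : SymHeap} {zs : List ℕ} {s : Stack}

theorem agree_on_vars_of_agree_off (hzA : ∀ z ∈ zs, z ∉ A.vars) {s' : Stack}
    (hs' : ∀ x, x ∉ zs → s' x = s x) : ∀ x ∈ A.spatial.vars, s x = s' x :=
  fun x hx => (hs' x fun hz => hzA x hz (Or.inr hx)).symm

theorem chiSat_of_sat_of_not_sat (hzA : ∀ z ∈ zs, z ∉ A.vars) {h : Heap} (hA : A.sat s h)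
    (hB : ¬ QSymHeap.sat s h ⟨zs, Q⟩) : chiSat A zs Q s := by
  refine ⟨gammaSat_of_sat hA, fun s' hs' => ?_⟩
  have hA' : A.spatial.sat s' h :=
    (Spatial.sat_congr (agree_on_vars_of_agree_off hzA hs')).1 hA.2
  by_contra! ⟨hγ, hAQ, hQA, hψ₁, hψ₂⟩
  obtain ⟨hpure, hwf⟩ := gammaSat_iff.1 hγ
  exact hB ⟨s', hs', hpure, sat_of_not_phiSat_of_not_psiSat hA' hwf hAQ hQA hψ₁ hψ₂⟩

theorem exists_sat_not_sat_of_chiSat (hzA : ∀ z ∈ zs, z ∉ A.vars)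
    (hw : ∀ p ∈ Q.spatial.ptos, ∀ z ∈ zs, z ∉ Trm.vars p.2) (hχ : chiSat A zs Q s) :
    ∃ h : Heap, A.sat s h ∧ ¬ QSymHeap.sat s h ⟨zs, Q⟩ := by
  obtain ⟨hγ, hχ⟩ := hχ
  obtain ⟨hpure, hwf⟩ := gammaSat_iff.1 hγ
  set d := (Q.spatial.ptos.map fun q => q.2.eval s).sum + 1
  set h := A.spatial.canonicalHeap s d
  refine ⟨h, ⟨hpure, Spatial.sat_canonicalHeap hwf⟩, ?_⟩
  rintro ⟨s', hs', hQpure, hQ⟩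
  have hagree := agree_on_vars_of_agree_off hzA hs'
  have hA' : A.spatial.sat s' h := (Spatial.sat_congr hagree).1 (Spatial.sat_canonicalHeap hwf)
  have hd : ∀ a ∈ A.spatial.arrs, ∀ k, a.1.eval s' ≤ k → k ≤ a.2.eval s' →
      h.lookup k = some d := by
    intro a ha k hk₁ hk₂
    obtain ⟨ha₁, ha₂⟩ := Spatial.vars_subset_of_mem_arrs ha
    rw [← Trm.eval_congr fun x hx => hagree x (ha₁ hx)] at hk₁
    rw [← Trm.eval_congr fun x hx => hagree x (ha₂ hx)] at hk₂
    exact Spatial.lookup_canonicalHeap_of_mem_arrs hwf ha hk₁ hk₂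
  have hQd : ∀ q ∈ Q.spatial.ptos, q.2.eval s' ≠ d := by
    intro q hq
    rw [← Trm.eval_congr fun x hx => (hs' x fun hz => hw q hq x hz hx).symm]
    have := List.le_sum_of_mem (List.mem_map_of_mem (f := fun q : Trm × Trm => q.2.eval s) hq)
    omega
  rcases hχ s' hs' with hγQ | hAQ | hQA | hψ₁ | hψ₂
  · exact hγQ (gammaSat_of_sat ⟨hQpure, hQ⟩)
  · exact not_phiSat_of_sat hA' hQ hAQ
  · exact not_phiSat_of_sat hQ hA' hQA
  · exact not_psi1Sat_of_lookup_eq hQ hd hQd hψ₁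
  · exact not_psi2Sat_of_sat hA' hQ hψ₂

end Chi

/-- Lemma (χ): let `A` be quantifier-free and `B = ∃z⃗. Q`, with `z⃗` disjoint
from the variables of `A` and no right-hand side variable of a points-to in `Q`
among `z⃗`. Then for every stack `s`: `s ⊨ χ(A,B)` iff there is a heap `h` with
`s,h ⊨ A` and `s,h ⊭ B`. -/
theorem stmt_17 (A : SymHeap) (zs : List ℕ) (Q : SymHeap)
    (hzA : ∀ z ∈ zs, z ∉ A.vars)
    (hw : ∀ p ∈ Q.spatial.ptos, ∀ z ∈ zs, z ∉ Trm.vars p.2)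
    (s : Stack) :
    chiSat A zs Q s ↔ ∃ h : Heap, A.sat s h ∧ ¬ QSymHeap.sat s h ⟨zs, Q⟩ :=
  ⟨exists_sat_not_sat_of_chiSat hzA hw, fun ⟨_, hA, hB⟩ => chiSat_of_sat_of_not_sat hzA hA hB⟩
end

section
/- Let G = (V, E) be an undirected graph with vertices v_1, …, v_n of which v_1, …, v_k are the leaves, and let A_G and B_G be the ↦-free symbolic heaps constructed from G for the entailment reduction. Then A_G ⊨ B_G if and only if every 3-colouring of the leaves of G extends to a proper 3-colouring of the whole graph G (i.e., an assignment of colours in {1,2,3} to all vertices such that no two adjacent vertices share a colour). -/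
/-! ### The 2-round 3-colourability reduction for entailment.
The graph `G` has vertices `v_1, …, v_n` (indexed by `Fin n`), of which the
first `kk` are the leaves, and edges `E : Fin m → Fin n × Fin n`.
Variables: `c_{i,1}` is `var i` (for `i < n`) and `c̃_{ij}` for the `j`-th edge
is `var (n + j)`. The per-edge base addresses `e_{ij}` are natural-number
constants chosen so that the blocks `[e_{ij}+1, e_{ij}+3]` are pairwise
disjoint. -/

/-- The pure constraint `1 ≤ t ≤ 3`. -/
def oneLeLe3 (t : Trm) : PureF :=
  PureF.and (PureF.le (Trm.const 1) t) (PureF.le t (Trm.const 3))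

/-- `A_G = ⋀_{i=1}^{kk} (1 ≤ c_{i,1} ≤ 3) : ⊛_{(v_i,v_j)∈E} array(e_{ij}+1, e_{ij}+3)`. -/
def heapAGent (kk m : ℕ) (e : Fin m → ℕ) : SymHeap :=
  ⟨bigAnd (List.ofFn fun i : Fin kk => oneLeLe3 (Trm.var i.1)),
   bigStar (List.ofFn fun j : Fin m =>
      Spatial.arr (Trm.const (e j + 1)) (Trm.const (e j + 3)))⟩

/-- The quantifier-free body of `B_G`:
`⋀_{i=1}^{n} (1 ≤ c_{i,1} ≤ 3) ∧ ⋀_{(v_i,v_j)∈E} (1 ≤ c̃_{ij} ≤ 3) :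
 ⊛_{(v_i,v_j)∈E} array(e_{ij}+c_{i,1}, e_{ij}+c_{i,1}) *
   array(e_{ij}+c_{j,1}, e_{ij}+c_{j,1}) * array(e_{ij}+c̃_{ij}, e_{ij}+c̃_{ij})`. -/
def heapBGentBody (n m : ℕ) (E : Fin m → Fin n × Fin n) (e : Fin m → ℕ) : SymHeap :=
  ⟨PureF.and
     (bigAnd (List.ofFn fun i : Fin n => oneLeLe3 (Trm.var i.1)))
     (bigAnd (List.ofFn fun j : Fin m => oneLeLe3 (Trm.var (n + j.1)))),
   bigStar (List.ofFn fun j : Fin m =>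
     Spatial.star
       (Spatial.arr (Trm.add (Trm.const (e j)) (Trm.var ((E j).1 : ℕ)))
                    (Trm.add (Trm.const (e j)) (Trm.var ((E j).1 : ℕ))))
       (Spatial.star
         (Spatial.arr (Trm.add (Trm.const (e j)) (Trm.var ((E j).2 : ℕ)))
                      (Trm.add (Trm.const (e j)) (Trm.var ((E j).2 : ℕ))))
         (Spatial.arr (Trm.add (Trm.const (e j)) (Trm.var (n + j.1)))
                      (Trm.add (Trm.const (e j)) (Trm.var (n + j.1))))))⟩

/-- The existentially quantified variables `z⃗` of `B_G`: all variables of `B_G`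
not occurring in `A_G`, i.e. `c_{i,1}` for `i ≥ kk` and all `c̃_{ij}`. -/
def entBound (n kk m : ℕ) : List ℕ :=
  (List.range n).drop kk ++ (List.range m).map (fun j => n + j)

/-- Every 3-colouring of the leaves (the first `kk` vertices) extends to a
proper 3-colouring of the whole graph. -/
def LeafColouringsExtend (n kk m : ℕ) (hkn : kk ≤ n)
    (E : Fin m → Fin n × Fin n) : Prop :=
  ∀ cl : Fin kk → Fin 3, ∃ col : Fin n → Fin 3,
    (∀ i : Fin kk, col (Fin.castLE hkn i) = cl i) ∧
    ∀ j : Fin m, col (E j).1 ≠ col (E j).2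

/-! Each edge owns a block of three cells `[e + 1, e + 3]` in `A_G`. In `B_G` that block has to be
split into the three single cells `e + c_i`, `e + c_j`, `e + c̃_ij`, which is possible exactly when
these three values are `1, 2, 3` in some order. Hence a model of `B_G` on the heap of `A_G` is a
proper 3-colouring of `G` (with `c̃_ij` the colour missing on the edge), and since the leaf
variables are not quantified in `B_G`, it extends the leaf colours fixed by the stack. -/

lemma bigAnd_sat_iff {s : Stack} {ps : List PureF} : (bigAnd ps).sat s ↔ ∀ p ∈ ps, p.sat s := by
  induction ps with
  | nil => simp [bigAnd, PureF.sat]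
  | cons p ps ih => simp [bigAnd, PureF.sat, ih]

lemma bigAnd_ofFn_sat_iff {s : Stack} {k : ℕ} {f : Fin k → PureF} :
    (bigAnd (List.ofFn f)).sat s ↔ ∀ i, (f i).sat s := by
  simp [bigAnd_sat_iff]

lemma oneLeLe3_sat_iff {s : Stack} {t : Trm} :
    (oneLeLe3 t).sat s ↔ 1 ≤ t.eval s ∧ t.eval s ≤ 3 := by
  simp [oneLeLe3, PureF.sat, Trm.eval]

lemma mem_entBound {n kk m x : ℕ} :
    x ∈ entBound n kk m ↔ (kk ≤ x ∧ x < n) ∨ (n ≤ x ∧ x < n + m) := by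
  simp only [entBound, List.range_eq_range', List.drop_range', List.mem_append, List.mem_range'_1,
    List.mem_map]
  constructor
  · rintro (h | ⟨j, hj, rfl⟩) <;> omega
  · rintro (h | h)
    · omega
    · exact Or.inr ⟨x - n, by omega, by omega⟩

lemma Heap.exists_keys_eq (S : Finset ℕ) : ∃ h : Heap, h.keys = S := by
  induction S using Finset.induction_on with
  | empty => exact ⟨∅, Finmap.keys_empty⟩
  | insert a S _ ih =>
    obtain ⟨h, rfl⟩ := ih
    exact ⟨Finmap.singleton a 0 ∪ h, by rw [Finmap.keys_union, Finmap.keys_singleton]; rfl⟩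

lemma Heap.mem_foldr_union {x : ℕ} {hs : List Heap} :
    x ∈ hs.foldr (· ∪ ·) ∅ ↔ ∃ g ∈ hs, x ∈ g := by
  induction hs with
  | nil => simpa using Finmap.notMem_empty
  | cons g hs ih => simp [Finmap.mem_union, ih]

namespace Spatial

variable {s : Stack} {h : Heap} {t u : Trm} {F : Spatial}

lemma sat_arr_self_iff : (arr t t).sat s h ↔ h.keys = {t.eval s} := by
  simp [Spatial.sat]

lemma sat_star_arr_self_of_sat_erase (ht : t.eval s ∈ h) (hF : F.sat s (h.erase (t.eval s))) :
    (star (arr t t) F).sat s h := by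
  obtain ⟨v, hv⟩ := Finmap.mem_iff.1 ht
  have hdisj : (Finmap.singleton (t.eval s) v).Disjoint (h.erase (t.eval s)) := by
    intro x hx
    rw [Finmap.mem_singleton] at hx
    exact hx ▸ Finmap.notMem_erase_self
  refine ⟨_, _, hdisj, ?_, sat_arr_self_iff.2 (Finmap.keys_singleton _ _), hF⟩
  rw [← Finmap.union_comm_of_disjoint hdisj.symm, Finmap.erase_union_singleton _ _ _ hv]

lemma eval_ne_of_sat_star_arr_self (hsat : (star (arr t t) (star (arr u u) F)).sat s h) :
    t.eval s ≠ u.eval s := by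
  obtain ⟨h₁, -, hdisj, -, ht, h₂, h₃, -, rfl, hu, -⟩ := hsat
  rw [sat_arr_self_iff] at ht hu
  intro htu
  refine hdisj (t.eval s) ?_ (Finmap.mem_union.2 (Or.inl ?_))
  · simp [← Finmap.mem_keys, ht]
  · simp [← Finmap.mem_keys, hu, htu]

lemma sat_star_arr_self₃ {v : Trm}
    (hkeys : h.keys = {t.eval s, u.eval s, v.eval s})
    (htu : t.eval s ≠ u.eval s) (htv : t.eval s ≠ v.eval s) (huv : u.eval s ≠ v.eval s) :
    (star (arr t t) (star (arr u u) (arr v v))).sat s h := by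
  refine sat_star_arr_self_of_sat_erase (by simp [← Finmap.mem_keys, hkeys]) ?_
  refine sat_star_arr_self_of_sat_erase (by simp [← Finmap.mem_keys, hkeys, huv, htu.symm]) ?_
  rw [sat_arr_self_iff, Finmap.keys_erase, Finmap.keys_erase, hkeys]
  ext x
  simp only [Finset.mem_erase, Finset.mem_insert, Finset.mem_singleton]
  grind

lemma bigStar_ofFn_sat {m : ℕ} {f : Fin m → Spatial} {hs : Fin m → Heap}
    (hdisj : Pairwise fun i j => (hs i).Disjoint (hs j)) (hsat : ∀ j, (f j).sat s (hs j)) :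
    (bigStar (List.ofFn f)).sat s ((List.ofFn hs).foldr (· ∪ ·) ∅) := by
  induction m with
  | zero => simp [bigStar, Spatial.sat]
  | succ m ih =>
    rw [List.ofFn_succ, List.ofFn_succ]
    refine ⟨hs 0, _, ?_, rfl, hsat 0, ih (fun i j hij => hdisj (by simpa using hij))
      (fun j => hsat j.succ)⟩
    intro x hx hx'
    obtain ⟨g, hg, hxg⟩ := Heap.mem_foldr_union.1 hx'
    obtain ⟨i, rfl⟩ := List.mem_ofFn.1 hg
    exact hdisj (Fin.succ_ne_zero i).symm x hx hxg

lemma bigStar_ofFn_mono {s' : Stack} {m : ℕ} {f g : Fin m → Spatial}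
    (hfg : ∀ j h, (f j).sat s h → (g j).sat s' h) (hf : (bigStar (List.ofFn f)).sat s h) :
    (bigStar (List.ofFn g)).sat s' h := by
  induction m generalizing h with
  | zero => simpa [bigStar, Spatial.sat] using hf
  | succ m ih =>
    rw [List.ofFn_succ] at hf ⊢
    obtain ⟨h₁, h₂, hdisj, rfl, h₁sat, h₂sat⟩ := hf
    exact ⟨h₁, h₂, hdisj, rfl, hfg 0 h₁ h₁sat, ih (fun j => hfg j.succ) h₂sat⟩

lemma sat_of_sat_bigStar {Fs : List Spatial} (hsat : (bigStar Fs).sat s h) (hF : F ∈ Fs) :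
    ∃ h', F.sat s h' := by
  induction Fs generalizing h with
  | nil => simp at hF
  | cons G Fs ih =>
    obtain ⟨h₁, h₂, -, -, h₁sat, h₂sat⟩ := hsat
    rcases List.mem_cons.1 hF with rfl | hF
    · exact ⟨h₁, h₁sat⟩
    · exact ih h₂sat hF

end Spatial

lemma exists_stack_extend {n m : ℕ} (s : Stack) (v : Fin n → ℕ) (w : Fin m → ℕ) :
    ∃ s' : Stack, (∀ i : Fin n, s' i = v i) ∧ (∀ j : Fin m, s' (n + j) = w j) ∧
      ∀ x, n + m ≤ x → s' x = s x := by
  refine ⟨fun x => if hx : x < n then v ⟨x, hx⟩ else if hx' : x - n < m then w ⟨x - n, hx'⟩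
    else s x, fun i => by simp, fun j => by simp, fun x hx => ?_⟩
  simp only
  rw [dif_neg (by omega), dif_neg (by omega)]

/-- For `a ≠ b`, `-(a + b)` is the remaining element of `Fin 3`. -/
def thirdColour (a b : Fin 3) : Fin 3 := -(a + b)

lemma thirdColour_ne_left {a b : Fin 3} (h : a ≠ b) : thirdColour a b ≠ a := by
  revert a b; decide

lemma thirdColour_ne_right {a b : Fin 3} (h : a ≠ b) : thirdColour a b ≠ b := by
  revert a b; decide

section Reduction

variable {n kk m : ℕ} {E : Fin m → Fin n × Fin n} {e : Fin m → ℕ} {s s₀ : Stack} {h : Heap}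

lemma heapAGent_pure_sat_iff :
    (heapAGent kk m e).pure.sat s ↔ ∀ i : Fin kk, 1 ≤ s i ∧ s i ≤ 3 := by
  simp [heapAGent, bigAnd_ofFn_sat_iff, oneLeLe3_sat_iff, Trm.eval]

lemma heapBGentBody_pure_sat_iff :
    (heapBGentBody n m E e).pure.sat s ↔
      (∀ i : Fin n, 1 ≤ s i ∧ s i ≤ 3) ∧ ∀ j : Fin m, 1 ≤ s (n + j) ∧ s (n + j) ≤ 3 := by
  simp [heapBGentBody, PureF.sat, bigAnd_ofFn_sat_iff, oneLeLe3_sat_iff, Trm.eval]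

lemma exists_sat_heapAGent_spatial
    (hblocks : ∀ j₁ j₂ : Fin m, j₁ ≠ j₂ →
      Disjoint (Finset.Icc (e j₁ + 1) (e j₁ + 3)) (Finset.Icc (e j₂ + 1) (e j₂ + 3)))
    (s : Stack) : ∃ h, (heapAGent kk m e).spatial.sat s h := by
  choose hs hkeys using fun j => Heap.exists_keys_eq (Finset.Icc (e j + 1) (e j + 3))
  refine ⟨_, Spatial.bigStar_ofFn_sat (hs := hs) (fun i j hij x hi hj => ?_) fun j => ?_⟩
  · rw [← Finmap.mem_keys, hkeys] at hi hj
    exact Finset.disjoint_left.1 (hblocks i j hij) hi hj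
  · exact ⟨by simp [Trm.eval], hkeys j⟩

lemma heapBGentBody_spatial_ne (hB : (heapBGentBody n m E e).spatial.sat s h) (j : Fin m) :
    s (E j).1 ≠ s (E j).2 := by
  obtain ⟨_, hj⟩ := Spatial.sat_of_sat_bigStar hB (List.mem_ofFn.2 ⟨j, rfl⟩)
  simpa [Trm.eval] using Spatial.eval_ne_of_sat_star_arr_self hj

lemma heapBGentBody_spatial_sat (hA : (heapAGent kk m e).spatial.sat s₀ h)
    (hpure : (heapBGentBody n m E e).pure.sat s)
    (hdist : ∀ j : Fin m, s (E j).1 ≠ s (E j).2 ∧ s (E j).1 ≠ s (n + j) ∧ s (E j).2 ≠ s (n + j)) :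
    (heapBGentBody n m E e).spatial.sat s h := by
  obtain ⟨hvert, hedge⟩ := heapBGentBody_pure_sat_iff.1 hpure
  refine Spatial.bigStar_ofFn_mono (fun j _ hblock => ?_) hA
  have hkeys := hblock.2
  obtain ⟨h12, h13, h23⟩ := hdist j
  have := hvert (E j).1
  have := hvert (E j).2
  have := hedge j
  refine Spatial.sat_star_arr_self₃ ?_ (by simpa [Trm.eval]) (by simpa [Trm.eval])
    (by simpa [Trm.eval])
  rw [hkeys]
  ext x
  simp only [Trm.eval, Finset.mem_Icc, Finset.mem_insert, Finset.mem_singleton]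
  omega

end Reduction

lemma leafColouringsExtend_of_entails {n kk m : ℕ} (hkn : kk ≤ n) (E : Fin m → Fin n × Fin n)
    {e : Fin m → ℕ}
    (hblocks : ∀ j₁ j₂ : Fin m, j₁ ≠ j₂ →
      Disjoint (Finset.Icc (e j₁ + 1) (e j₁ + 3)) (Finset.Icc (e j₂ + 1) (e j₂ + 3)))
    (hEnt : ∀ (s : Stack) (h : Heap), (heapAGent kk m e).sat s h →
      QSymHeap.sat s h ⟨entBound n kk m, heapBGentBody n m E e⟩) :
    LeafColouringsExtend n kk m hkn E := by
  intro cl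
  obtain ⟨s, hs⟩ : ∃ s : Stack, ∀ i : Fin kk, s i = cl i + 1 :=
    ⟨fun x => if hx : x < kk then cl ⟨x, hx⟩ + 1 else 0, fun i => by simp⟩
  obtain ⟨h, hA⟩ := exists_sat_heapAGent_spatial hblocks s
  obtain ⟨s', hagree, hpure, hB⟩ := hEnt s h ⟨heapAGent_pure_sat_iff.2 fun i => by grind, hA⟩
  have hvert := (heapBGentBody_pure_sat_iff.1 hpure).1
  refine ⟨fun i => ⟨s' i - 1, by grind⟩, fun i => Fin.ext ?_,
    fun j hcol => heapBGentBody_spatial_ne hB j ?_⟩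
  · have hfree : (i : ℕ) ∉ entBound n kk m := by rw [mem_entBound]; omega
    simp [hagree _ hfree, hs]
  · have := hvert (E j).1
    have := hvert (E j).2
    have := congrArg Fin.val hcol
    simp only at this
    omega

lemma entails_of_leafColouringsExtend {n kk m : ℕ} {hkn : kk ≤ n} {E : Fin m → Fin n × Fin n}
    (e : Fin m → ℕ) (hExt : LeafColouringsExtend n kk m hkn E) (s : Stack) (h : Heap)
    (hA : (heapAGent kk m e).sat s h) :
    QSymHeap.sat s h ⟨entBound n kk m, heapBGentBody n m E e⟩ := by
  obtain ⟨hleafBounds, hA⟩ := hA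
  rw [heapAGent_pure_sat_iff] at hleafBounds
  obtain ⟨col, hleaf, hproper⟩ := hExt fun i => ⟨s i - 1, by grind⟩
  obtain ⟨s', hvert, hedge, hrest⟩ := exists_stack_extend s (fun i => col i + 1)
    (fun j => thirdColour (col (E j).1) (col (E j).2) + 1)
  have hpure : (heapBGentBody n m E e).pure.sat s' := by
    refine heapBGentBody_pure_sat_iff.2 ⟨fun i => ?_, fun j => ?_⟩
    · rw [hvert]; omega
    · rw [hedge]; omega
  refine ⟨s', fun x hx => ?_, hpure, heapBGentBody_spatial_sat hA hpure fun j => ?_⟩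
  · rw [mem_entBound] at hx
    rcases lt_or_ge x kk with hxk | hxk
    · have hcol := hvert (Fin.castLE hkn ⟨x, hxk⟩)
      have := hleafBounds ⟨x, hxk⟩
      rw [hleaf] at hcol
      simp only [Fin.val_castLE] at hcol this
      omega
    · exact hrest x (by omega)
  · have hne := hproper j
    simp only [hvert, hedge, ne_eq, add_left_inj, Fin.val_inj]
    exact ⟨hne, (thirdColour_ne_left hne).symm, (thirdColour_ne_right hne).symm⟩

theorem stmt_19_general (n kk m : ℕ) (hkn : kk ≤ n)
    (E : Fin m → Fin n × Fin n)
    (e : Fin m → ℕ)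
    (hblocks : ∀ j₁ j₂ : Fin m, j₁ ≠ j₂ →
      Disjoint (Finset.Icc (e j₁ + 1) (e j₁ + 3)) (Finset.Icc (e j₂ + 1) (e j₂ + 3))) :
    (∀ (s : Stack) (h : Heap), (heapAGent kk m e).sat s h →
        QSymHeap.sat s h ⟨entBound n kk m, heapBGentBody n m E e⟩) ↔
    LeafColouringsExtend n kk m hkn E :=
  ⟨leafColouringsExtend_of_entails hkn E hblocks, entails_of_leafColouringsExtend e⟩

/-- Lemma (colourability/entailment): `A_G ⊨ B_G` iff every 3-colouring of the
leaves of `G` extends to a proper 3-colouring of the whole graph `G`. -/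
theorem stmt_19 (n kk m : ℕ) (hkn : kk ≤ n)
    (E : Fin m → Fin n × Fin n) (hirr : ∀ j : Fin m, (E j).1 ≠ (E j).2)
    (e : Fin m → ℕ)
    (hblocks : ∀ j₁ j₂ : Fin m, j₁ ≠ j₂ →
      Disjoint (Finset.Icc (e j₁ + 1) (e j₁ + 3)) (Finset.Icc (e j₂ + 1) (e j₂ + 3))) :
    (∀ (s : Stack) (h : Heap), (heapAGent kk m e).sat s h →
        QSymHeap.sat s h ⟨entBound n kk m, heapBGentBody n m E e⟩) ↔
    LeafColouringsExtend n kk m hkn E :=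
  stmt_19_general n kk m hkn E e hblocks
end
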